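/- Let f(x) = (1/2)exp(-|x|) be the density of the standard Laplace distribution Lap(0,1). Let ν ≥ 0, b > 0, and C_k = ν·b·ln(k) for k ∈ ℕ, k ≥ 1. Then for any compact set X ⊆ ℝ, the infimum over x ∈ X and k ≥ 1 of (k^ν / b) · f((x − C_k)/b) is strictly positive. -/
import Mathlib


noncomputable def lapPDF (x : ℝ) : ℝ := (1/2) * Real.exp (-|x|)

theorem stmt_0 (ν b : ℝ) (hν : 0 ≤ ν) (hb : 0 < b)
    (C : ℕ → ℝ) (hC : ∀ k, C k = ν * b * Real.log k)
    (X : Set ℝ) (hX : IsCompact X) :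
    ∃ ε > 0, ∀ x ∈ X, ∀ k : ℕ, 1 ≤ k →
      ε ≤ ((k : ℝ) ^ ν / b) * lapPDF ((x - C k) / b) := by
  obtain ⟨M, hM⟩ := hX.isBounded.exists_norm_le
  refine ⟨Real.exp (-(|M| / b)) / (2 * b), by positivity, ?_⟩
  intro x hx k hk
  have hklog : 0 ≤ Real.log k := Real.log_nonneg (by exact_mod_cast hk)
  have hkpos : (0:ℝ) < k := by exact_mod_cast hk
  have hxM : |x| ≤ |M| := le_trans (hM x hx) (le_abs_self M)
  have hpow : (k:ℝ) ^ ν = Real.exp (ν * Real.log k) := by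
    rw [Real.rpow_def_of_pos hkpos, mul_comm]
  have hnn : (0:ℝ) ≤ ν * b * Real.log k := by positivity
  have habs : |x - C k| ≤ |x| + ν * b * Real.log k := by
    rw [hC, sub_eq_add_neg]
    calc |x + -(ν * b * Real.log k)| ≤ |x| + |-(ν * b * Real.log k)| := abs_add_le _ _
      _ = |x| + ν * b * Real.log k := by rw [abs_neg, abs_of_nonneg hnn]
  rw [lapPDF, abs_div, abs_of_pos hb]
  have key : Real.exp (-(|M| / b)) * Real.exp (-(ν * Real.log k))
      ≤ Real.exp (-(|x - C k| / b)) := by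
    rw [← Real.exp_add]
    apply Real.exp_le_exp.mpr
    have h2 : |x - C k| / b ≤ |M| / b + ν * Real.log k := by
      rw [div_le_iff₀ hb]
      have h3 : (|M| / b + ν * Real.log k) * b = |M| + ν * Real.log k * b := by
        field_simp
      rw [h3]
      nlinarith [habs, hxM]
    linarith
  calc Real.exp (-(|M| / b)) / (2 * b)
      = ((k:ℝ) ^ ν / b) * ((1/2) * (Real.exp (-(|M| / b)) * Real.exp (-(ν * Real.log k)))) := by
        rw [hpow, Real.exp_neg (ν * Real.log (k:ℕ))]
        field_simp [Real.exp_ne_zero]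
    _ ≤ ((k : ℝ) ^ ν / b) * (1 / 2 * Real.exp (-(|x - C k| / b))) := by
        apply mul_le_mul_of_nonneg_left _ (by positivity)
        exact mul_le_mul_of_nonneg_left key (by norm_num)
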